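/- arXiv:2106.11630 — 6 statements merged into one kernel-verified Lean document; each statement's English description precedes it below -/
import Mathlib

section
/- Let S be a set of nonnegative integers containing 0 and 1, and let a = (a₁,…,a_k) with a₁ ≤ ⋯ ≤ a_k be a vector of positive integers such that V_S(a) \ {0} equals the set of all integers ≥ n. Then every integer v with n ≤ v ≤ 2n−1 occurs as some component a_j of a; in particular a₁ = n and (n, n+1, …, 2n−1) is a subsequence of a. -/
/-!
Every component of `a` is itself a sum (take `s = Pi.single j 1`), so all components are at
least `n`. A sum with two nonzero terms, or with a coefficient at least `2`, is then at least
`2n`; hence each `v ∈ [n, 2n - 1]`, being such a sum, is a single component `a j`.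
-/

open Finset

variable {ι : Type*}

lemma le_sum_mul_of_ne_zero {m : ℕ} {a s : ι → ℕ} (ha : ∀ i, m ≤ a i) {t : Finset ι}
    (h : ∑ i ∈ t, a i * s i ≠ 0) : m ≤ ∑ i ∈ t, a i * s i := by
  obtain ⟨i, hi, hne⟩ := exists_ne_zero_of_sum_ne_zero h
  calc m ≤ a i := ha i
    _ ≤ a i * s i := Nat.le_mul_of_pos_right _ (Nat.pos_of_ne_zero (right_ne_zero_of_mul hne))
    _ ≤ ∑ i ∈ t, a i * s i :=
      single_le_sum (f := fun i => a i * s i) (fun _ _ => Nat.zero_le _) hi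

lemma exists_eq_of_sum_mul_lt_two_mul [Fintype ι] [DecidableEq ι] {m : ℕ} {a s : ι → ℕ}
    (ha : ∀ i, m ≤ a i) (h0 : ∑ i, a i * s i ≠ 0) (hlt : ∑ i, a i * s i < 2 * m) :
    ∃ j, a j = ∑ i, a i * s i := by
  obtain ⟨j, -, hj⟩ := exists_ne_zero_of_sum_ne_zero h0
  have hsplit := add_sum_erase univ (fun i => a i * s i) (mem_univ j)
  have hterm : m ≤ a j * s j := le_sum_mul_of_ne_zero ha (t := {j}) (by simpa using hj)
  have hrest : ∑ i ∈ univ.erase j, a i * s i = 0 := by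
    by_contra hne
    have := le_sum_mul_of_ne_zero ha hne
    omega
  have hsj : s j = 1 := by
    by_contra hne
    have : a j * 2 ≤ a j * s j :=
      Nat.mul_le_mul_left _ (by have := right_ne_zero_of_mul hj; omega)
    have := ha j
    omega
  exact ⟨j, by rw [← hsplit, hrest, hsj]; simp⟩

lemma sum_mul_pi_single [Fintype ι] [DecidableEq ι] (a : ι → ℕ) (j : ι) :
    ∑ i, a i * (Pi.single j 1 : ι → ℕ) i = a j := by
  simp [Pi.single_apply]

/-- If V'_S(a) = T(n) with a sorted, then a₁ = n and (n, n+1, …, 2n−1) is a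
subsequence of a; in particular every v with n ≤ v ≤ 2n−1 occurs as a component. -/
theorem stmt_1 (S : Set ℕ) (h0 : 0 ∈ S) (h1 : 1 ∈ S) (n k : ℕ) (hk : 0 < k)
    (a : Fin k → ℕ) (hpos : ∀ i, 0 < a i) (hmono : Monotone a)
    (huniv : {g : ℕ | g ≠ 0 ∧ ∃ s : Fin k → ℕ, (∀ i, s i ∈ S) ∧ g = ∑ i, a i * s i}
      = {g : ℕ | n ≤ g}) :
    a ⟨0, hk⟩ = n ∧ (∀ v, n ≤ v → v ≤ 2 * n - 1 → ∃ j, a j = v) ∧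
      (((List.range n).map (n + ·) : Multiset ℕ) ≤ Multiset.map a Finset.univ.val) := by
  have hV (g : ℕ) : (g ≠ 0 ∧ ∃ s : Fin k → ℕ, (∀ i, s i ∈ S) ∧ g = ∑ i, a i * s i) ↔ n ≤ g :=
    Set.ext_iff.mp huniv g
  have hn : 0 < n := Nat.pos_of_ne_zero fun hn => ((hV 0).mpr (hn ▸ le_rfl)).1 rfl
  have hge (j : Fin k) : n ≤ a j := by
    refine (hV _).mp ⟨(hpos j).ne', Pi.single j 1, fun i => ?_, (sum_mul_pi_single a j).symm⟩
    by_cases h : i = j <;> simp [h, h0, h1]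
  have hocc (v : ℕ) (hnv : n ≤ v) (hv : v ≤ 2 * n - 1) : ∃ j, a j = v := by
    obtain ⟨hv0, s, -, rfl⟩ := (hV v).mpr hnv
    exact exists_eq_of_sum_mul_lt_two_mul hge hv0 (by omega)
  refine ⟨?_, hocc, ?_⟩
  · obtain ⟨j, hj⟩ := hocc n le_rfl (by omega)
    exact le_antisymm (hj ▸ hmono (Fin.mk_le_mk.mpr (Nat.zero_le _))) (hge _)
  · have hnodup : ((List.range n).map (n + ·)).Nodup :=
      List.nodup_range.map (add_right_injective n)
    rw [Multiset.le_iff_subset (Multiset.coe_nodup.mpr hnodup)]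
    intro x hx
    obtain ⟨m, hm, rfl⟩ := List.mem_map.mp hx
    obtain ⟨j, hj⟩ := hocc (n + m) (by omega) (by rw [List.mem_range] at hm; omega)
    exact Multiset.mem_map.mpr ⟨j, mem_univ j, hj⟩
end

section
/- Let S be a set of nonnegative integers containing 0 and 1 but not containing 2, and let a = (a₁,…,a_k) with a₁ ≤ ⋯ ≤ a_k be a vector of positive integers with V'_S(a) = T(n). Then either (n, n, n+1, …, 2n−1) or (n, n+1, …, 2n−1, 2n) is a subsequence of a. -/
/-!
Every entry of `a` is itself a nonzero value, so `n ≤ aᵢ` for all `i`. Below `3n` a coefficient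
`sᵢ ≥ 3` is impossible and `sᵢ = 2` is excluded by `2 ∉ S`, so each value `g < 3n` is a subset sum
of `a`. A subset sum below `2n` has one term, so each of `n, …, 2n - 1` is an entry of `a`, and the
subset sum `2n` is either a single entry `2n` or two entries equal to `n`.
-/

open Finset

/-- The paper's `V'_S(a)`. -/
def nonzeroValues {ι : Type*} [Fintype ι] (S : Set ℕ) (a : ι → ℕ) : Set ℕ :=
  {g | g ≠ 0 ∧ ∃ s : ι → ℕ, (∀ i, s i ∈ S) ∧ g = ∑ i, a i * s i}

section Values

variable {ι : Type*} [Fintype ι] {S : Set ℕ} {a : ι → ℕ}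

lemma apply_mem_nonzeroValues [DecidableEq ι] (h0 : 0 ∈ S) (h1 : 1 ∈ S) {i : ι} (hi : a i ≠ 0) :
    a i ∈ nonzeroValues S a := by
  refine ⟨hi, Pi.single i 1, fun j => ?_, by simp [Pi.single_apply]⟩
  rcases eq_or_ne j i with rfl | hj
  · simpa using h1
  · simpa [hj] using h0

lemma sum_mul_eq_sum_filter_of_le_one (a s : ι → ℕ) (hs : ∀ i, s i ≤ 1) :
    ∑ i, a i * s i = ∑ i ∈ univ.filter (s · = 1), a i := by
  rw [sum_filter]
  refine sum_congr rfl fun i _ => ?_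
  rcases Nat.le_one_iff_eq_zero_or_eq_one.mp (hs i) with h | h <;> simp [h]

lemma exists_finset_sum_eq_of_mem_nonzeroValues (h2 : 2 ∉ S) {n : ℕ} (ha : ∀ i, n ≤ a i)
    {g : ℕ} (hg : g ∈ nonzeroValues S a) (hg3 : g < 3 * n) :
    ∃ F : Finset ι, ∑ i ∈ F, a i = g := by
  obtain ⟨-, s, hs, rfl⟩ := hg
  refine ⟨_, (sum_mul_eq_sum_filter_of_le_one a s fun i => ?_).symm⟩
  by_contra! hi
  have hsi : s i ≠ 2 := fun h => h2 (h ▸ hs i)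
  have hterm : 3 * n ≤ a i * s i := by
    rw [mul_comm 3]; exact Nat.mul_le_mul (ha i) (by omega)
  have := single_le_sum (f := fun j => a j * s j) (fun j _ => Nat.zero_le _) (mem_univ i)
  omega

end Values

section SubsetSums

variable {ι : Type*} {a : ι → ℕ} {n : ℕ}

lemma card_lt_of_sum_lt (ha : ∀ i, n ≤ a i) {F : Finset ι} {c : ℕ}
    (hF : ∑ i ∈ F, a i < c * n) : #F < c := by
  have : #F * n ≤ ∑ i ∈ F, a i := by simpa using F.card_nsmul_le_sum a n fun i _ => ha i
  exact lt_of_mul_lt_mul_right (this.trans_lt hF) (Nat.zero_le n)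

lemma exists_apply_eq_of_sum_eq (ha : ∀ i, n ≤ a i) {F : Finset ι} {m : ℕ}
    (hm : n ≤ m) (hm2 : m < 2 * n) (hF : ∑ i ∈ F, a i = m) : ∃ i, a i = m := by
  have hcard := card_lt_of_sum_lt ha (c := 2) (hF.symm ▸ hm2)
  have hne : F.Nonempty := nonempty_of_sum_ne_zero (s := F) (f := a) (by omega)
  have hF1 : #F = 1 := by have := hne.card_pos; omega
  obtain ⟨i, rfl⟩ := card_eq_one.mp hF1
  exact ⟨i, by simpa using hF⟩

lemma exists_apply_eq_two_mul_or_of_sum_eq [DecidableEq ι] (hn : 0 < n) (ha : ∀ i, n ≤ a i)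
    {F : Finset ι} (hF : ∑ i ∈ F, a i = 2 * n) :
    (∃ i, a i = 2 * n) ∨ ∃ i j, i ≠ j ∧ a i = n ∧ a j = n := by
  have hcard := card_lt_of_sum_lt ha (F := F) (c := 3) (by omega)
  have hne : F.Nonempty := nonempty_of_sum_ne_zero (s := F) (f := a) (by omega)
  have := hne.card_pos
  obtain h | h : #F = 1 ∨ #F = 2 := by omega
  · obtain ⟨i, rfl⟩ := card_eq_one.mp h
    exact .inl ⟨i, by simpa using hF⟩
  · obtain ⟨i, j, hij, rfl⟩ := card_eq_two.mp h
    rw [sum_pair hij] at hF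
    have := ha i
    have := ha j
    exact .inr ⟨i, j, hij, by omega, by omega⟩

end SubsetSums

lemma Multiset.cons_le_of_nodup_of_two_le_count {β : Type*} [DecidableEq β] {x : β}
    {t M : Multiset β} (ht : t.Nodup) (htM : t ⊆ M) (hx : 2 ≤ M.count x) : x ::ₘ t ≤ M := by
  rw [Multiset.le_iff_count]
  intro y
  rw [Multiset.count_cons]
  by_cases hy : y = x
  · subst hy
    have := Multiset.nodup_iff_count_le_one.mp ht y
    simp only [if_true]
    omega
  · simpa [hy] using Multiset.count_le_of_le y ((Multiset.le_iff_subset ht).mpr htM)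

lemma two_le_count_map_univ {ι β : Type*} [Fintype ι] [DecidableEq ι] [DecidableEq β] {f : ι → β}
    {i j : ι} (hij : i ≠ j) {x : β} (hi : f i = x) (hj : f j = x) :
    2 ≤ (Multiset.map f univ.val).count x := by
  have hle : Multiset.map f ({i, j} : Finset ι).val ≤ Multiset.map f univ.val :=
    Multiset.map_le_map (val_le_iff.mpr (subset_univ _))
  refine le_trans ?_ (Multiset.count_le_of_le x hle)
  simp [hij, hi, hj]

theorem stmt_2_general (S : Set ℕ) (h0 : 0 ∈ S) (h1 : 1 ∈ S) (h2 : 2 ∉ S) (n k : ℕ)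
    (a : Fin k → ℕ) (hpos : ∀ i, 0 < a i)
    (huniv : {g : ℕ | g ≠ 0 ∧ ∃ s : Fin k → ℕ, (∀ i, s i ∈ S) ∧ g = ∑ i, a i * s i}
      = {g : ℕ | n ≤ g}) :
    ((n :: (List.range n).map (n + ·) : Multiset ℕ) ≤ Multiset.map a Finset.univ.val) ∨
      (((List.range (n + 1)).map (n + ·) : Multiset ℕ) ≤ Multiset.map a Finset.univ.val) := by
  have hV : ∀ g, g ∈ nonzeroValues S a ↔ n ≤ g := fun g => Set.ext_iff.mp huniv g
  have hn : 0 < n := Nat.pos_of_ne_zero fun h => ((hV 0).mpr h.le).1 rfl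
  have ha : ∀ i, n ≤ a i := fun i => (hV _).mp (apply_mem_nonzeroValues h0 h1 (hpos i).ne')
  have hsub : ∀ m, n ≤ m → m < 3 * n → ∃ F : Finset (Fin k), ∑ i ∈ F, a i = m :=
    fun m hm hm3 => exists_finset_sum_eq_of_mem_nonzeroValues h2 ha ((hV m).mpr hm) hm3
  have hlow : ∀ m, n ≤ m → m < 2 * n → m ∈ Multiset.map a univ.val := fun m hm hm2 => by
    obtain ⟨F, hF⟩ := hsub m hm (by omega)
    obtain ⟨i, hi⟩ := exists_apply_eq_of_sum_eq ha hm hm2 hF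
    exact Multiset.mem_map.mpr ⟨i, mem_univ_val i, hi⟩
  have hnodup : ∀ m, (List.range' n m : Multiset ℕ).Nodup :=
    fun m => Multiset.coe_nodup.mpr (List.nodup_range' 1)
  simp only [← List.range'_eq_map_range]
  obtain ⟨F, hF⟩ := hsub (2 * n) (by omega) (by omega)
  rcases exists_apply_eq_two_mul_or_of_sum_eq hn ha hF with ⟨i, hi⟩ | ⟨i, j, hij, hi, hj⟩
  · refine .inr ((Multiset.le_iff_subset (hnodup _)).mpr fun m hm => ?_)
    obtain ⟨hm, hm2⟩ := List.mem_range'_1.mp hm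
    rcases Nat.lt_or_ge m (2 * n) with hlt | hge
    · exact hlow m hm hlt
    · exact Multiset.mem_map.mpr ⟨i, mem_univ_val i, by omega⟩
  · refine .inl (Multiset.cons_le_of_nodup_of_two_le_count (hnodup _) (fun m hm => ?_)
      (two_le_count_map_univ hij hi hj))
    obtain ⟨hm, hm2⟩ := List.mem_range'_1.mp hm
    exact hlow m hm (by omega)

/-- If 2 ∉ S and V'_S(a) = T(n), then (n,n,n+1,…,2n−1) or (n,n+1,…,2n) is a
subsequence (sub-multiset) of a. -/
theorem stmt_2 (S : Set ℕ) (h0 : 0 ∈ S) (h1 : 1 ∈ S) (h2 : 2 ∉ S) (n k : ℕ)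
    (a : Fin k → ℕ) (hpos : ∀ i, 0 < a i) (hmono : Monotone a)
    (huniv : {g : ℕ | g ≠ 0 ∧ ∃ s : Fin k → ℕ, (∀ i, s i ∈ S) ∧ g = ∑ i, a i * s i}
      = {g : ℕ | n ≤ g}) :
    ((n :: (List.range n).map (n + ·) : Multiset ℕ) ≤ Multiset.map a Finset.univ.val) ∨
      (((List.range (n + 1)).map (n + ·) : Multiset ℕ) ≤ Multiset.map a Finset.univ.val) :=
  stmt_2_general S h0 h1 h2 n k a hpos huniv
end

section
/- Let S be a set of nonnegative integers containing 0 and 1, let e₁ ≥ 1 and e₂, e₃ ≥ 0, and suppose V_S(1^{e₁} 2^{e₂} 3^{e₃}) = ℕ₀ (i.e., every nonnegative integer is a sum of e₁ elements of S, plus twice e₂ elements of S, plus three times e₃ elements of S). Then for any integer n ≥ 2e₃ + 3, every integer m ≥ n can be written as a₁s₁ + ⋯ where the coefficient vector is n repeated e₁ times, followed by n+1, n+2, …, 2n−1 each once, followed by 2n repeated e₂ times, with all s_i ∈ S. That is, the vector n^{e₁} (n+1)¹ ⋯ (2n−1)¹ (2n)^{e₂} is tight T(n)-universal with respect to S. 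-/
/-!
Every coefficient is at least `n`, so nothing in `(0, n)` is represented. Conversely, write `g ≥ n`
as `n * N + δ * (n + j)` with `δ ∈ {0, 1}` and `1 ≤ j < n`, and `N = Σ sᵢ + 2 Σ tᵢ + 3 Σ rᵢ`.
Then `n Σ sᵢ` and `2n Σ tᵢ` go to the blocks `n^{e₁}` and `(2n)^{e₂}`, and each `3n * rᵢ` is split as
`(n + a) * rᵢ + (n + (n - a)) * rᵢ` over a pair of middle coefficients. Since `n ≥ 2 e₃ + 3`, the
middle block has room for `e₃` disjoint such pairs avoiding the slot `n + j`.
-/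

open Function Finset

lemma le_sum_mul_of_ne_zero_s3 {ι κ : Type*} [Fintype ι] [Fintype κ] {n : ℕ}
    (s : ι → ℕ) (u : Fin (n - 1) → ℕ) (t : κ → ℕ)
    (h : n * ∑ i, s i + ∑ k : Fin (n - 1), (n + 1 + (k : ℕ)) * u k + 2 * n * ∑ i, t i ≠ 0) :
    n ≤ n * ∑ i, s i + ∑ k : Fin (n - 1), (n + 1 + (k : ℕ)) * u k + 2 * n * ∑ i, t i := by
  have hu : n * ∑ k, u k ≤ ∑ k : Fin (n - 1), (n + 1 + (k : ℕ)) * u k := by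
    rw [mul_sum]
    exact sum_le_sum fun k _ => Nat.mul_le_mul_right _ (by omega)
  have hpos : ∑ i, s i + ∑ k, u k + ∑ i, t i ≠ 0 := by
    rintro hzero
    simp only [Nat.add_eq_zero_iff, sum_eq_zero_iff, mem_univ, forall_const] at hzero
    simp [hzero] at h
  calc n ≤ n * (∑ i, s i + ∑ k, u k + ∑ i, t i) := Nat.le_mul_of_pos_right n (by omega)
    _ ≤ _ := by
      have ht : n * ∑ i, t i ≤ 2 * n * ∑ i, t i := Nat.mul_le_mul_right _ (by omega)
      rw [mul_add, mul_add]
      omega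

lemma exists_eq_mul_add_mul {n g : ℕ} (hn : 2 ≤ n) (hg : n ≤ g) :
    ∃ N δ : ℕ, ∃ k : Fin (n - 1), (δ = 0 ∨ δ = 1) ∧ g = n * N + δ * (n + 1 + (k : ℕ)) := by
  have hdiv := Nat.div_add_mod g n
  by_cases hj : g % n = 0
  · exact ⟨g / n, 0, ⟨0, by omega⟩, .inl rfl, by omega⟩
  · have hq : 1 ≤ g / n := (Nat.one_le_div_iff (by omega)).mpr hg
    refine ⟨g / n - 1, 1, ⟨g % n - 1, by have := Nat.mod_lt g (by omega : 0 < n); omega⟩,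
      .inr rfl, ?_⟩
    have : n * (g / n) = n * (g / n - 1) + n := by
      rw [← Nat.mul_add_one, Nat.sub_add_cancel hq]
    dsimp only
    omega

lemma Fin.add_one_add_add_one_rev {n : ℕ} (k : Fin (n - 1)) :
    (n + 1 + (k : ℕ)) + (n + 1 + (k.rev : ℕ)) = 3 * n := by
  have := k.isLt
  rw [Fin.val_rev]
  omega

lemma Fin.exists_injective_rev_pairs {m e : ℕ} (hm : 2 * e + 2 ≤ m) (k₀ : Fin m) :
    ∃ p : Option (Fin e ⊕ Fin e) → Fin m,
      Injective p ∧ p none = k₀ ∧ ∀ i, p (.some (.inr i)) = (p (.some (.inl i))).rev := by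
  have hk₀ := k₀.isLt
  have hrev := k₀.val_rev
  -- the lower ends of the pairs fill `[0, e]` except the smaller of `k₀, rev k₀` if it lies there
  set b : Fin (e + 1) := ⟨min (min k₀ k₀.rev) e, by omega⟩
  set f : Fin e → Fin m := Fin.castLE (by omega) ∘ b.succAbove
  have hf : Injective f := (Fin.castLE_injective _).comp Fin.succAbove_right_injective
  have hfe (i : Fin e) : (f i : ℕ) ≤ e := by simp [f]; omega
  have hfb (i : Fin e) : (f i : ℕ) ≠ b := by
    simpa [f, Fin.ext_iff] using b.succAbove_ne i
  have hfk (i : Fin e) : f i ≠ k₀ ∧ (f i).rev ≠ k₀ := by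
    have hle := hfe i
    have hne := hfb i
    dsimp only [b] at hne
    rw [ne_eq, ne_eq, Fin.ext_iff, Fin.ext_iff, Fin.val_rev]
    omega
  have hsep (i j : Fin e) : f i ≠ (f j).rev := by
    have := hfe i; have := hfe j; have := (f j).val_rev
    rw [ne_eq, Fin.ext_iff]
    omega
  refine ⟨fun x => x.elim k₀ (Sum.elim f (Fin.rev ∘ f)), ?_, rfl, fun _ => rfl⟩
  rintro (_ | i | i) (_ | j | j) h <;>
    simp only [Option.elim, Sum.elim_inl, Sum.elim_inr, comp_apply, Fin.rev_inj] at h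
  all_goals first
    | rfl
    | exact congrArg _ (congrArg _ (hf h))
    | exact absurd h (hfk _).1
    | exact absurd h (hfk _).2
    | exact absurd h.symm (hfk _).1
    | exact absurd h.symm (hfk _).2
    | exact absurd h (hsep _ _)
    | exact absurd h.symm (hsep _ _)

lemma Function.extend_mem {α β γ : Type*} {S : Set γ} {f : α → β} {g : α → γ} {e' : β → γ}
    (hg : ∀ a, g a ∈ S) (he' : ∀ b, e' b ∈ S) (b : β) : extend f g e' b ∈ S := by
  classical
  rw [extend_def]
  split_ifs
  exacts [hg _, he' _]

lemma exists_sum_middle_eq {S : Set ℕ} (h0 : 0 ∈ S) {n e δ : ℕ} (hn : 2 * e + 3 ≤ n)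
    (k₀ : Fin (n - 1)) (hδ : δ ∈ S) (r : Fin e → ℕ) (hr : ∀ i, r i ∈ S) :
    ∃ u : Fin (n - 1) → ℕ, (∀ k, u k ∈ S) ∧
      ∑ k : Fin (n - 1), (n + 1 + (k : ℕ)) * u k = δ * (n + 1 + (k₀ : ℕ)) + 3 * n * ∑ i, r i := by
  obtain ⟨p, hp, hpk₀, hprev⟩ := Fin.exists_injective_rev_pairs (by omega : 2 * e + 2 ≤ n - 1) k₀
  set w : Option (Fin e ⊕ Fin e) → ℕ := fun x => x.elim δ (Sum.elim r r)
  refine ⟨extend p w 0, extend_mem (by rintro (_ | i | i) <;> simp [w, hδ, hr]) (fun _ => h0), ?_⟩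
  calc ∑ k : Fin (n - 1), (n + 1 + (k : ℕ)) * extend p w 0 k
      = ∑ x, (n + 1 + (p x : ℕ)) * w x := by
        refine (Fintype.sum_of_injective p hp _ _ (fun k hk => ?_) (fun x => ?_)).symm
        · rw [extend_apply' _ _ _ hk, Pi.zero_apply, mul_zero]
        · rw [hp.extend_apply]
    _ = δ * (n + 1 + (k₀ : ℕ)) + 3 * n * ∑ i, r i := by
        simp only [Fintype.sum_option, Fintype.sum_sum_type, ← sum_add_distrib, mul_sum, hprev,
          hpk₀, w, Option.elim, Sum.elim_inl, Sum.elim_inr, ← add_mul,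
          Fin.add_one_add_add_one_rev]
        ring

theorem stmt_3_general (S : Set ℕ) (h0 : 0 ∈ S) (h1 : 1 ∈ S) (e₁ e₂ e₃ : ℕ)
    (huniv : ∀ N : ℕ, ∃ s : Fin e₁ → ℕ, ∃ t : Fin e₂ → ℕ, ∃ r : Fin e₃ → ℕ,
      (∀ i, s i ∈ S) ∧ (∀ i, t i ∈ S) ∧ (∀ i, r i ∈ S) ∧
      N = ∑ i, s i + 2 * ∑ i, t i + 3 * ∑ i, r i)
    (n : ℕ) (hn : 2 * e₃ + 3 ≤ n) :
    {g : ℕ | g ≠ 0 ∧ ∃ s : Fin e₁ → ℕ, ∃ u : Fin (n - 1) → ℕ, ∃ t : Fin e₂ → ℕ,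
        (∀ i, s i ∈ S) ∧ (∀ i, u i ∈ S) ∧ (∀ i, t i ∈ S) ∧
        g = n * ∑ i, s i + (∑ i : Fin (n - 1), (n + 1 + (i : ℕ)) * u i) + 2 * n * ∑ i, t i}
      = {g : ℕ | n ≤ g} := by
  ext g
  constructor
  · rintro ⟨hg0, s, u, t, -, -, -, rfl⟩
    exact le_sum_mul_of_ne_zero_s3 s u t hg0
  · intro (hg : n ≤ g)
    obtain ⟨N, δ, k₀, hδ, rfl⟩ := exists_eq_mul_add_mul (by omega) hg
    obtain ⟨s, t, r, hs, ht, hr, rfl⟩ := huniv N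
    obtain ⟨u, hu, hsum⟩ :=
      exists_sum_middle_eq h0 hn k₀ (hδ.elim (· ▸ h0) (· ▸ h1)) r hr
    refine ⟨by omega, s, u, t, hs, hu, ht, ?_⟩
    rw [hsum]
    ring

/-- If V_S(1^{e₁} 2^{e₂} 3^{e₃}) = ℕ₀, then for n ≥ 2e₃+3 the vector
n^{e₁} (n+1) ⋯ (2n−1) (2n)^{e₂} is tight T(n)-universal with respect to S. -/
theorem stmt_3 (S : Set ℕ) (h0 : 0 ∈ S) (h1 : 1 ∈ S) (e₁ e₂ e₃ : ℕ) (he₁ : 1 ≤ e₁)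
    (huniv : ∀ N : ℕ, ∃ s : Fin e₁ → ℕ, ∃ t : Fin e₂ → ℕ, ∃ r : Fin e₃ → ℕ,
      (∀ i, s i ∈ S) ∧ (∀ i, t i ∈ S) ∧ (∀ i, r i ∈ S) ∧
      N = ∑ i, s i + 2 * ∑ i, t i + 3 * ∑ i, r i)
    (n : ℕ) (hn : 2 * e₃ + 3 ≤ n) :
    {g : ℕ | g ≠ 0 ∧ ∃ s : Fin e₁ → ℕ, ∃ u : Fin (n - 1) → ℕ, ∃ t : Fin e₂ → ℕ,
        (∀ i, s i ∈ S) ∧ (∀ i, u i ∈ S) ∧ (∀ i, t i ∈ S) ∧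
        g = n * ∑ i, s i + (∑ i : Fin (n - 1), (n + 1 + (i : ℕ)) * u i) + 2 * n * ∑ i, t i}
      = {g : ℕ | n ≤ g} :=
  stmt_3_general S h0 h1 e₁ e₂ e₃ huniv n hn
end

section
/- The ternary triangular form T(x) + T(y) + 3T(z) (x, y, z ∈ ℕ₀) represents every nonnegative integer not congruent to 2 modulo 3. -/
/-!
Completing squares, `8 (T x + T y + 3 T z) + 5 = (2x+1)² + (2y+1)² + 3 (2z+1)²`, and for
`n ≡ 5 (mod 8)` every representation `n = x² + y² + 3z²` can be rearranged into one with `x, y, z`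
odd. So it suffices that `x² + y² + 3z²` represents every `n ≡ 5 (mod 8)` prime to `3`.

A prime `q ≡ 4n - 3 (mod 12n)` (Dirichlet) satisfies `nD = q + 3` for some `D`, and quadratic
reciprocity makes `-D` a square `β²` modulo `q`; with `qS = β² + D`, the form
`n x² + S y² + q z² + 2xy + 2β yz` is positive definite of determinant `3` and represents `n`.
Minimising the trace over the forms obtained by unimodular substitutions leaves a reduced form,
and the only reduced positive definite forms of determinant `3` are `x² + y² + 3z²` and
`x² + 2y² ± 2yz + 2z²`; the latter do not represent `5` modulo `8`.
-/

open scoped NumberTheorySymbols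

/-- The form with Gram matrix `[[a, b, c], [b, s, t], [c, t, u]]`. -/
@[ext]
structure TernaryForm where
  a : ℤ
  b : ℤ
  c : ℤ
  s : ℤ
  t : ℤ
  u : ℤ

namespace TernaryForm

variable {f g : TernaryForm} {n : ℤ}

def eval (f : TernaryForm) (v : ℤ × ℤ × ℤ) : ℤ :=
  f.a * v.1 ^ 2 + f.s * v.2.1 ^ 2 + f.u * v.2.2 ^ 2
    + 2 * f.b * v.1 * v.2.1 + 2 * f.c * v.1 * v.2.2 + 2 * f.t * v.2.1 * v.2.2

def det (f : TernaryForm) : ℤ :=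
  f.a * f.s * f.u + 2 * f.b * f.c * f.t - f.a * f.t ^ 2 - f.b ^ 2 * f.u - f.c ^ 2 * f.s

def trace (f : TernaryForm) : ℤ := f.a + f.s + f.u

def PosDef (f : TernaryForm) : Prop := ∀ v ≠ 0, 0 < f.eval v

def Represents (f : TernaryForm) (n : ℤ) : Prop := ∃ v, f.eval v = n

theorem PosDef.a_pos (hf : f.PosDef) : 0 < f.a := by
  simpa [eval] using hf (1, 0, 0) (by simp)

theorem PosDef.s_pos (hf : f.PosDef) : 0 < f.s := by
  simpa [eval] using hf (0, 1, 0) (by simp)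

theorem PosDef.u_pos (hf : f.PosDef) : 0 < f.u := by
  simpa [eval] using hf (0, 0, 1) (by simp)

theorem posDef_of_minors (h₁ : 0 < f.a) (h₂ : 0 < f.a * f.s - f.b ^ 2) (h₃ : 0 < f.det) :
    f.PosDef := by
  rintro ⟨x, y, z⟩ hv
  set m := f.a * f.s - f.b ^ 2
  -- completing the square twice
  have key : f.a * m * f.eval (x, y, z) =
      m * (f.a * x + f.b * y + f.c * z) ^ 2 + (m * y + (f.a * f.t - f.b * f.c) * z) ^ 2
        + f.a * f.det * z ^ 2 := by
    simp only [m, eval, det]; ring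
  suffices 0 < f.a * m * f.eval (x, y, z) from pos_of_mul_pos_right this (by positivity)
  rw [key]
  rcases eq_or_ne z 0 with rfl | hz
  · rcases eq_or_ne y 0 with rfl | hy
    · have hx : x ≠ 0 := by rintro rfl; exact hv rfl
      have : 0 < m * (f.a * x) ^ 2 := by positivity
      linarith
    · have : 0 < (m * y) ^ 2 := by positivity
      nlinarith [sq_nonneg (f.a * x + f.b * y)]
  · have : 0 < f.a * f.det * z ^ 2 := by positivity
    nlinarith [sq_nonneg (f.a * x + f.b * y + f.c * z),
      sq_nonneg (m * y + (f.a * f.t - f.b * f.c) * z)]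

structure Admissible (f : TernaryForm) (n : ℤ) : Prop where
  posDef : f.PosDef
  det_eq : f.det = 3
  represents : f.Represents n

theorem Admissible.of_equiv (hf : f.Admissible n) (σ : ℤ × ℤ × ℤ ≃ ℤ × ℤ × ℤ) (hσ : σ 0 = 0)
    (heval : ∀ v, g.eval v = f.eval (σ v)) (hdet : g.det = f.det) : g.Admissible n where
  posDef v hv := heval v ▸ hf.posDef _ (by rwa [← hσ, σ.injective.ne_iff])
  det_eq := hdet.trans hf.det_eq
  represents :=
    let ⟨v, hv⟩ := hf.represents
    ⟨σ.symm v, by rw [heval, σ.apply_symm_apply, hv]⟩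

theorem Admissible.swapXY (hf : f.Admissible n) :
    (⟨f.s, f.b, f.t, f.a, f.c, f.u⟩ : TernaryForm).Admissible n :=
  hf.of_equiv ⟨fun v => (v.2.1, v.1, v.2.2), fun v => (v.2.1, v.1, v.2.2), fun _ => rfl,
    fun _ => rfl⟩ rfl (fun _ => by simp only [eval, Equiv.coe_fn_mk]; ring)
    (by simp only [det]; ring)

theorem Admissible.swapYZ (hf : f.Admissible n) :
    (⟨f.a, f.c, f.b, f.u, f.t, f.s⟩ : TernaryForm).Admissible n :=
  hf.of_equiv ⟨fun v => (v.1, v.2.2, v.2.1), fun v => (v.1, v.2.2, v.2.1), fun _ => rfl,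
    fun _ => rfl⟩ rfl (fun _ => by simp only [eval, Equiv.coe_fn_mk]; ring)
    (by simp only [det]; ring)

theorem Admissible.shearXY (hf : f.Admissible n) (k : ℤ) :
    (⟨f.a, f.b + k * f.a, f.c, f.s + 2 * k * f.b + k ^ 2 * f.a, f.t + k * f.c, f.u⟩ :
      TernaryForm).Admissible n :=
  hf.of_equiv ⟨fun v => (v.1 + k * v.2.1, v.2), fun v => (v.1 - k * v.2.1, v.2),
    fun _ => by simp, fun _ => by simp⟩ (by simp)
    (fun _ => by simp only [eval, Equiv.coe_fn_mk]; ring) (by simp only [det]; ring)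

theorem Admissible.shearXZ (hf : f.Admissible n) (k : ℤ) :
    (⟨f.a, f.b, f.c + k * f.a, f.s, f.t + k * f.b, f.u + 2 * k * f.c + k ^ 2 * f.a⟩ :
      TernaryForm).Admissible n :=
  hf.of_equiv ⟨fun v => (v.1 + k * v.2.2, v.2), fun v => (v.1 - k * v.2.2, v.2),
    fun _ => by simp, fun _ => by simp⟩ (by simp)
    (fun _ => by simp only [eval, Equiv.coe_fn_mk]; ring) (by simp only [det]; ring)

theorem Admissible.shearYZ (hf : f.Admissible n) (k : ℤ) :
    (⟨f.a, f.b, f.c + k * f.b, f.s, f.t + k * f.s, f.u + 2 * k * f.t + k ^ 2 * f.s⟩ :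
      TernaryForm).Admissible n :=
  hf.of_equiv ⟨fun v => (v.1, v.2.1 + k * v.2.2, v.2.2),
    fun v => (v.1, v.2.1 - k * v.2.2, v.2.2), fun _ => by simp, fun _ => by simp⟩ (by simp)
    (fun _ => by simp only [eval, Equiv.coe_fn_mk]; ring) (by simp only [det]; ring)

theorem Admissible.shearX (hf : f.Admissible n) (k m : ℤ) :
    (⟨f.eval (1, k, m), f.b + k * f.s + m * f.t, f.c + k * f.t + m * f.u, f.s, f.t, f.u⟩ :
      TernaryForm).Admissible n :=
  hf.of_equiv ⟨fun v => (v.1, v.2.1 + k * v.1, v.2.2 + m * v.1),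
    fun v => (v.1, v.2.1 - k * v.1, v.2.2 - m * v.1), fun _ => by simp, fun _ => by simp⟩
    (by simp) (fun _ => by simp only [eval, Equiv.coe_fn_mk]; ring)
    (by simp only [det, eval]; ring)

/-- Positive diagonals give `a, s < trace`, so `size` refines the lexicographic order on
`(trace, a, s)`. -/
def size (f : TernaryForm) : ℤ := f.trace ^ 3 + f.a * f.trace + f.s

theorem PosDef.size_nonneg (hf : f.PosDef) : 0 ≤ f.size := by
  have := hf.a_pos; have := hf.s_pos; have := hf.u_pos
  unfold size trace; positivity

theorem PosDef.size_lt_size (hf : f.PosDef) (hg : g.PosDef)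
    (h : g.trace < f.trace ∨ g.trace = f.trace ∧ (g.a < f.a ∨ g.a = f.a ∧ g.s < f.s)) :
    g.size < f.size := by
  have := hf.a_pos; have := hf.s_pos; have := hf.u_pos
  have := hg.a_pos; have := hg.s_pos; have := hg.u_pos
  unfold size
  rcases h with h | ⟨h, h' | ⟨h', h''⟩⟩
  · have : (g.trace + 1) ^ 3 ≤ f.trace ^ 3 := by
      gcongr
      · unfold trace; positivity
      · exact h
    unfold trace at *
    nlinarith
  · have : g.s < f.trace := by unfold trace at *; linarith
    rw [h]
    nlinarith
  · rw [h, h']; linarith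

structure IsReduced (f : TernaryForm) : Prop where
  a_le_s : f.a ≤ f.s
  s_le_u : f.s ≤ f.u
  abs_two_b_le : |2 * f.b| ≤ f.a
  abs_two_c_le : |2 * f.c| ≤ f.a
  abs_two_t_le : |2 * f.t| ≤ f.s
  a_le_eval : ∀ k m : ℤ, |k| = 1 → |m| = 1 → f.a ≤ f.eval (1, k, m)

theorem Admissible.exists_isReduced (hf : f.Admissible n) :
    ∃ g : TernaryForm, g.Admissible n ∧ g.IsReduced := by
  obtain ⟨-, ⟨g, hg, rfl⟩, hmin⟩ := Int.exists_least_of_bdd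
    (P := fun k => ∃ g : TernaryForm, g.Admissible n ∧ g.size = k)
    ⟨0, fun _ ⟨g, hg, hk⟩ => hk ▸ hg.posDef.size_nonneg⟩ ⟨_, f, hf, rfl⟩
  have descend {g' : TernaryForm} (hg' : g'.Admissible n)
      (h : g'.trace < g.trace ∨ g'.trace = g.trace ∧ (g'.a < g.a ∨ g'.a = g.a ∧ g'.s < g.s)) :
      False :=
    (hg.posDef.size_lt_size hg'.posDef h).not_ge (hmin _ ⟨g', hg', rfl⟩)
  refine ⟨g, hg, ⟨?_, ?_, ?_, ?_, ?_, ?_⟩⟩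
  · by_contra! h
    exact descend hg.swapXY (Or.inr ⟨by simp only [trace]; ring, Or.inl h⟩)
  · by_contra! h
    exact descend hg.swapYZ (Or.inr ⟨by simp only [trace]; ring, Or.inr ⟨rfl, h⟩⟩)
  · by_contra! h
    rcases lt_abs.mp h with h | h
    · exact descend (hg.shearXY (-1)) (Or.inl (by simp only [trace]; linarith))
    · exact descend (hg.shearXY 1) (Or.inl (by simp only [trace]; linarith))
  · by_contra! h
    rcases lt_abs.mp h with h | h
    · exact descend (hg.shearXZ (-1)) (Or.inl (by simp only [trace]; linarith))
    · exact descend (hg.shearXZ 1) (Or.inl (by simp only [trace]; linarith))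
  · by_contra! h
    rcases lt_abs.mp h with h | h
    · exact descend (hg.shearYZ (-1)) (Or.inl (by simp only [trace]; linarith))
    · exact descend (hg.shearYZ 1) (Or.inl (by simp only [trace]; linarith))
  · intro k m _ _
    by_contra! h
    exact descend (hg.shearX k m) (Or.inl (by simp only [trace]; linarith))

theorem le_four_mul_det {β γ τ : ℤ} (hb : |2 * f.b| ≤ β) (hc : |2 * f.c| ≤ γ)
    (ht : |2 * f.t| ≤ τ) (ha : 0 ≤ f.a) (hs : 0 ≤ f.s) (hu : 0 ≤ f.u) :
    4 * f.a * f.s * f.u - β * γ * τ - f.a * τ ^ 2 - β ^ 2 * f.u - γ ^ 2 * f.s ≤ 4 * f.det := by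
  have hbct : |2 * f.b * (2 * f.c) * (2 * f.t)| ≤ β * γ * τ := by
    rw [abs_mul, abs_mul]
    exact mul_le_mul (mul_le_mul hb hc (abs_nonneg _) ((abs_nonneg _).trans hb)) ht
      (abs_nonneg _) (mul_nonneg ((abs_nonneg _).trans hb) ((abs_nonneg _).trans hc))
  have hb2 : (2 * f.b) ^ 2 ≤ β ^ 2 := sq_le_sq' (abs_le.mp hb).1 (abs_le.mp hb).2
  have hc2 : (2 * f.c) ^ 2 ≤ γ ^ 2 := sq_le_sq' (abs_le.mp hc).1 (abs_le.mp hc).2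
  have ht2 : (2 * f.t) ^ 2 ≤ τ ^ 2 := sq_le_sq' (abs_le.mp ht).1 (abs_le.mp ht).2
  unfold det
  nlinarith [neg_abs_le (2 * f.b * (2 * f.c) * (2 * f.t)), mul_le_mul_of_nonneg_left ht2 ha,
    mul_le_mul_of_nonneg_right hb2 hu, mul_le_mul_of_nonneg_right hc2 hs]

namespace IsReduced

variable (hf : f.IsReduced)
include hf

theorem s_eq_a (ha : 2 ≤ f.a) (hdet : f.det = 3) : f.s = f.a := by
  by_contra hne
  have hs : f.a + 1 ≤ f.s := by have := hf.a_le_s; omega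
  have := le_four_mul_det hf.abs_two_b_le hf.abs_two_c_le hf.abs_two_t_le (by omega) (by omega)
    (by linarith [hf.s_le_u])
  -- the bound of `le_four_mul_det` is `3as(s - a) + a(u - s)(4s - a) ≥ 18 > 4 det`
  have h1 : 0 ≤ f.a * (f.u - f.s) * (4 * f.s - f.a) :=
    mul_nonneg (mul_nonneg (by omega) (by linarith [hf.s_le_u])) (by omega)
  have h2 : 6 ≤ f.a * f.s := by nlinarith
  nlinarith

theorem u_eq_a_or (ha : 2 ≤ f.a) (hdet : f.det = 3) : f.u = f.a ∨ f.a = 2 ∧ f.u = 3 := by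
  have hs := hf.s_eq_a ha hdet
  have hu := hf.s_le_u
  have hbound := le_four_mul_det hf.abs_two_b_le hf.abs_two_c_le hf.abs_two_t_le (by omega)
    (by omega) (by omega)
  rw [hs, hdet] at hbound
  rw [hs] at hu
  -- the bound of `le_four_mul_det` is `3a²(u - a)`
  rcases hu.eq_or_lt with h | h
  · exact Or.inl h.symm
  · have ha2 : f.a = 2 := by nlinarith
    rw [ha2] at hbound h
    exact Or.inr ⟨ha2, by linarith⟩

theorem det_ne_three_of_diag_const (ha : 2 ≤ f.a) (hs : f.s = f.a) (hu : f.u = f.a) :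
    f.det ≠ 3 := by
  intro hdet
  obtain ⟨m, hm⟩ | hodd := Int.even_or_odd f.a
  · have : f.det = 2 * (m * (f.a ^ 2 - f.b ^ 2 - f.c ^ 2 - f.t ^ 2) + f.b * f.c * f.t) := by
      simp only [det, hs, hu]; rw [hm]; ring
    omega
  · -- `|2x|` is even, so `|2x| ≤ a` sharpens to `|2x| ≤ a - 1`
    have sharpen {x : ℤ} (hx : |2 * x| ≤ f.a) : |2 * x| ≤ f.a - 1 := by
      obtain ⟨k, hk⟩ := hodd
      rw [abs_mul, abs_two] at hx ⊢
      omega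
    have := le_four_mul_det (sharpen hf.abs_two_b_le) (sharpen hf.abs_two_c_le)
      (sharpen (hs ▸ hf.abs_two_t_le)) (by omega) (by omega) (by omega)
    rw [hs, hu] at this
    have ha3 : 3 ≤ f.a := by obtain ⟨k, hk⟩ := hodd; omega
    -- the bound of `le_four_mul_det` is `(3a - 1)² ≥ 64`
    nlinarith

theorem det_ne_three_of_diag_223 (ha : f.a = 2) (hs : f.s = 2) (hu : f.u = 3) :
    f.det ≠ 3 := by
  intro hdet
  have hb := abs_le.mp hf.abs_two_b_le
  have hc := abs_le.mp hf.abs_two_c_le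
  have ht := abs_le.mp hf.abs_two_t_le
  -- when `det = 3`, the vector `(1, -b, -c)` is shorter than the first basis vector
  have hE := hf.a_le_eval (-f.b) (-f.c)
  rw [ha] at hb hc
  rw [hs] at ht
  obtain hb | hb | hb : f.b = -1 ∨ f.b = 0 ∨ f.b = 1 := by omega
  all_goals obtain hc | hc | hc : f.c = -1 ∨ f.c = 0 ∨ f.c = 1 := by omega
  all_goals obtain ht | ht | ht : f.t = -1 ∨ f.t = 0 ∨ f.t = 1 := by omega
  all_goals revert hdet hE; simp only [det, eval, ha, hs, hu, hb, hc, ht]; norm_num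

theorem a_eq_one (ha : 0 < f.a) (hdet : f.det = 3) : f.a = 1 := by
  by_contra h
  have ha2 : 2 ≤ f.a := by omega
  have hs := hf.s_eq_a ha2 hdet
  rcases hf.u_eq_a_or ha2 hdet with hu | ⟨ha, hu⟩
  · exact hf.det_ne_three_of_diag_const ha2 hs hu hdet
  · exact hf.det_ne_three_of_diag_223 ha (hs.trans ha) hu hdet

theorem eq_of_a_eq_one (ha : f.a = 1) (hdet : f.det = 3) :
    f = ⟨1, 0, 0, 1, 0, 3⟩ ∨ f = ⟨1, 0, 0, 2, 1, 2⟩ ∨ f = ⟨1, 0, 0, 2, -1, 2⟩ := by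
  have hb := abs_le.mp hf.abs_two_b_le
  have hc := abs_le.mp hf.abs_two_c_le
  have ht := abs_le.mp hf.abs_two_t_le
  rw [ha] at hb hc
  have hb0 : f.b = 0 := by omega
  have hc0 : f.c = 0 := by omega
  have hsu : f.s * f.u - f.t ^ 2 = 3 := by
    rw [← hdet]; simp only [det, ha, hb0, hc0]; ring
  -- `4t² ≤ s² ≤ su` turns `su - t² = 3` into `su ≤ 4`
  have hs1 : 1 ≤ f.s := by linarith [hf.a_le_s]
  have hsu4 : f.s * f.u ≤ 4 := by nlinarith [hf.s_le_u]
  have hs2 : f.s ≤ 2 := by nlinarith [hf.s_le_u]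
  obtain hs | hs : f.s = 1 ∨ f.s = 2 := by omega
  · have ht0 : f.t = 0 := by omega
    have hu : f.u = 3 := by rw [hs, ht0] at hsu; linarith
    exact Or.inl (TernaryForm.ext ha hb0 hc0 hs ht0 hu)
  · rw [hs] at hsu ht
    obtain ht1 | ht0 | ht1 : f.t = -1 ∨ f.t = 0 ∨ f.t = 1 := by omega
    · have hu : f.u = 2 := by rw [ht1] at hsu; linarith
      exact Or.inr (Or.inr (TernaryForm.ext ha hb0 hc0 hs ht1 hu))
    · rw [ht0] at hsu; omega
    · have hu : f.u = 2 := by rw [ht1] at hsu; linarith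
      exact Or.inr (Or.inl (TernaryForm.ext ha hb0 hc0 hs ht1 hu))

end IsReduced

theorem not_represents_of_emod_eight_eq_five {t : ℤ} (ht : t = 1 ∨ t = -1) (hn : n % 8 = 5) :
    ¬ (⟨1, 0, 0, 2, t, 2⟩ : TernaryForm).Represents n := by
  rintro ⟨⟨x, y, z⟩, hv⟩
  have h8 : (n : ZMod 8) = 5 := by
    simpa [hn] using (ZMod.intCast_mod n 8).symm
  have hmod : (x : ZMod 8) ^ 2 + 2 * (y : ZMod 8) ^ 2 + 2 * (z : ZMod 8) ^ 2
      + 2 * (t : ZMod 8) * y * z = 5 := by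
    rw [← h8, ← hv]; simp only [eval]; push_cast; ring
  have key : ∀ x y z : ZMod 8,
      x ^ 2 + 2 * y ^ 2 + 2 * z ^ 2 + 2 * y * z ≠ 5 ∧
        x ^ 2 + 2 * y ^ 2 + 2 * z ^ 2 - 2 * y * z ≠ 5 := by
    decide
  rcases ht with rfl | rfl
  · exact (key x y z).1 (by simpa using hmod)
  · exact (key x y z).2 (by simpa [sub_eq_add_neg] using hmod)

theorem Admissible.exists_sq_add_sq_add_three_mul_sq (hf : f.Admissible n) (hn : n % 8 = 5) :
    ∃ x y z : ℤ, x ^ 2 + y ^ 2 + 3 * z ^ 2 = n := by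
  obtain ⟨g, hg, hred⟩ := hf.exists_isReduced
  obtain h | h | h := hred.eq_of_a_eq_one (hred.a_eq_one hg.posDef.a_pos hg.det_eq) hg.det_eq
  · obtain ⟨⟨x, y, z⟩, hv⟩ := hg.represents
    subst h
    exact ⟨x, y, z, by simp only [eval] at hv; linarith⟩
  · exact absurd (h ▸ hg.represents) (not_represents_of_emod_eight_eq_five (Or.inl rfl) hn)
  · exact absurd (h ▸ hg.represents) (not_represents_of_emod_eight_eq_five (Or.inr rfl) hn)


theorem jacobiSym_neg_three {m : ℕ} (hm : m % 4 = 1) : J(-3 | m) = J(m | 3) := by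
  rw [show (-3 : ℤ) = -1 * 3 by norm_num, jacobiSym.mul_left,
    jacobiSym.at_neg_one (Nat.odd_iff.mpr (by omega)), ZMod.χ₄_nat_one_mod_four hm, one_mul]
  exact_mod_cast jacobiSym.quadratic_reciprocity_one_mod_four' (by decide) hm

theorem isSquare_neg_of_mul_eq {n q : ℕ} {D : ℤ} [Fact q.Prime] (hn : n % 4 = 1)
    (hq : q % 4 = 1) (hn3 : n % 3 ≠ 0) (hqn : q % 3 = n % 3) (hD : n * D = q + 3) :
    IsSquare ((-D : ℤ) : ZMod q) := by
  have hJn : J(n | 3) ≠ 0 := jacobiSym.ne_zero <| by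
    rw [Int.gcd_natCast_natCast]
    exact ((Nat.Prime.coprime_iff_not_dvd Nat.prime_three).mpr (by omega)).symm
  have hqn' : (q : ℤ) % n = -3 % n := by
    rw [show (q : ℤ) = -3 + n * D by linarith, Int.add_mul_emod_self_left]
  have hnq : J(n | q) = J(n | 3) := by
    rw [jacobiSym.quadratic_reciprocity_one_mod_four hn (Nat.odd_iff.mpr (by omega)),
      jacobiSym.mod_left' hqn', jacobiSym_neg_three hn]
  have hq3 : J(-3 | q) = J(n | 3) := by
    rw [jacobiSym_neg_three hq]; exact jacobiSym.mod_left' (by omega)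
  have hmul : J(-D | q) * J(n | q) = J(-3 | q) := by
    rw [← jacobiSym.mul_left]
    exact jacobiSym.mod_left'
      (by rw [show -D * n = -3 + q * (-1) by linarith, Int.add_mul_emod_self_left])
  rw [hnq, hq3, mul_eq_right₀ hJn] at hmul
  exact ZMod.isSquare_of_jacobiSym_eq_one hmul

theorem isCoprime_four_mul_sub_three {n : ℕ} (hn3 : n % 3 ≠ 0) :
    IsCoprime (4 * n - 3 : ℤ) (12 * n : ℕ) := by
  have h3 : IsCoprime (n : ℤ) 3 := by
    rw [Int.isCoprime_iff_gcd_eq_one]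
    exact ((Nat.Prime.coprime_iff_not_dvd Nat.prime_three).mpr (by omega)).symm
  have c4 : IsCoprime (4 * n - 3 : ℤ) 4 := by
    rw [show (4 * n - 3 : ℤ) = -3 + 4 * n by ring]
    exact (Int.isCoprime_iff_gcd_eq_one.mpr (by norm_num)).add_mul_left_left _
  have c3 : IsCoprime (4 * n - 3 : ℤ) 3 := by
    rw [show (4 * n - 3 : ℤ) = n + 3 * (n - 1) by ring]
    exact h3.add_mul_left_left _
  have cn : IsCoprime (4 * n - 3 : ℤ) n := by
    rw [show (4 * n - 3 : ℤ) = -3 + n * 4 by ring]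
    exact h3.symm.neg_left.add_mul_left_left _
  rw [show ((12 * n : ℕ) : ℤ) = 4 * (3 * n) by push_cast; ring]
  exact c4.mul_right (c3.mul_right cn)

theorem exists_prime_mul_eq_add_three {n : ℕ} (hn : 0 < n) (hn3 : n % 3 ≠ 0) :
    ∃ q : ℕ, q.Prime ∧ q % 4 = 1 ∧ q % 3 = n % 3 ∧ ∃ D : ℤ, n * D = q + 3 := by
  obtain ⟨q, -, hq, hqmod⟩ :=
    Nat.forall_exists_prime_gt_and_zmodEq 0 (by omega) (isCoprime_four_mul_sub_three hn3)
  obtain ⟨k, hk⟩ := hqmod.symm.dvd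
  push_cast at hk
  have hq' : (q : ℤ) = 4 * n - 3 + 12 * (n * k) := by linear_combination hk
  generalize (n : ℤ) * k = M at hq'
  exact ⟨q, hq, by omega, by omega, 4 + 12 * k, by linear_combination -hk⟩

theorem exists_admissible {n : ℕ} (hn4 : n % 4 = 1) (hn1 : 1 < n) (hn3 : n % 3 ≠ 0) :
    ∃ f : TernaryForm, f.Admissible n := by
  obtain ⟨q, hq, hq4, hq3, D, hD⟩ := exists_prime_mul_eq_add_three (by omega) hn3
  have := Fact.mk hq
  obtain ⟨r, hr⟩ := isSquare_neg_of_mul_eq hn4 hq4 hn3 hq3 hD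
  obtain ⟨β, rfl⟩ := ZMod.intCast_surjective r
  obtain ⟨S, hS⟩ : (q : ℤ) ∣ β ^ 2 + D := by
    rw [← ZMod.intCast_zmod_eq_zero_iff_dvd]
    push_cast at hr ⊢
    linear_combination -hr
  have hS1 : 1 ≤ S := by
    have : 0 < D := pos_of_mul_pos_right (by omega) (by positivity : (0 : ℤ) ≤ n)
    have : 0 < (q : ℤ) * S := by nlinarith
    exact pos_of_mul_pos_right this (by positivity)
  have hdet : (⟨n, 1, 0, S, β, q⟩ : TernaryForm).det = 3 := by
    simp only [det]; linear_combination -(n : ℤ) * hS + hD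
  refine ⟨⟨n, 1, 0, S, β, q⟩, posDef_of_minors ?_ ?_ ?_, hdet, (1, 0, 0), by simp [eval]⟩
  · simp only; omega
  · simp only; nlinarith
  · rw [hdet]; norm_num

end TernaryForm

theorem sq_emod_eight_cases (x : ℤ) : x % 2 = 1 ∧ x ^ 2 % 8 = 1 ∨ x % 2 = 0 ∧ x ^ 2 % 4 = 0 := by
  obtain ⟨k, rfl | rfl⟩ := Int.even_or_odd' x
  · right
    rw [show (2 * k) ^ 2 = 4 * k ^ 2 by ring]
    omega
  · left
    obtain ⟨j, hj⟩ := Int.even_mul_succ_self k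
    rw [show (2 * k + 1) ^ 2 = 4 * (k * (k + 1)) + 1 by ring, hj]
    omega

theorem exists_odd_of_sq_add_sq_add_three_mul_sq {n x y z : ℤ} (hn : n % 8 = 5)
    (h : x ^ 2 + y ^ 2 + 3 * z ^ 2 = n) :
    ∃ x y z : ℤ, Odd x ∧ Odd y ∧ Odd z ∧ x ^ 2 + y ^ 2 + 3 * z ^ 2 = n := by
  simp only [Int.odd_iff]
  have hx := sq_emod_eight_cases x
  have hy := sq_emod_eight_cases y
  have hz := sq_emod_eight_cases z
  by_cases hz1 : z % 2 = 1
  · exact ⟨x, y, z, by omega, by omega, hz1, h⟩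
  -- with `z` even exactly one of `x`, `y` is odd, say `x`
  wlog hx1 : x % 2 = 1 generalizing x y
  · exact this (by linarith) hy hx (by omega)
  obtain ⟨B, rfl⟩ : 2 ∣ y := by omega
  obtain ⟨w, rfl⟩ : 2 ∣ z := by omega
  have h' : x ^ 2 + 4 * B ^ 2 + 12 * w ^ 2 = n := by linear_combination h
  have hB := sq_emod_eight_cases B
  have hw := sq_emod_eight_cases w
  -- `4B² + 12w² = (B + 3w)² + 3(B - w)²`, and `B + w` is odd
  exact ⟨x, B + 3 * w, B - w, hx1, by omega, by omega, by linear_combination h'⟩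

theorem exists_nat_sq_eq_of_odd {x : ℤ} (hx : Odd x) : ∃ X : ℕ, x ^ 2 = (2 * X + 1) ^ 2 := by
  obtain ⟨X, hX⟩ := Int.natAbs_odd.mpr hx
  exact ⟨X, by rw [← Int.natAbs_sq, hX]; push_cast; ring⟩

/-- T(x)+T(y)+3T(z) represents every nonnegative integer not ≡ 2 (mod 3). -/
theorem stmt_17 (N : ℕ) (hN : N % 3 ≠ 2) :
    ∃ x y z : ℕ, 2 * N = x * (x + 1) + y * (y + 1) + 3 * (z * (z + 1)) := by
  obtain ⟨f, hf⟩ := TernaryForm.exists_admissible (n := 8 * N + 5) (by omega) (by omega)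
    (by omega)
  obtain ⟨x, y, z, h⟩ := hf.exists_sq_add_sq_add_three_mul_sq (by push_cast; omega)
  obtain ⟨x, y, z, hx, hy, hz, h⟩ :=
    exists_odd_of_sq_add_sq_add_three_mul_sq (by push_cast; omega) h
  obtain ⟨X, hX⟩ := exists_nat_sq_eq_of_odd hx
  obtain ⟨Y, hY⟩ := exists_nat_sq_eq_of_odd hy
  obtain ⟨Z, hZ⟩ := exists_nat_sq_eq_of_odd hz
  refine ⟨X, Y, Z, ?_⟩
  rw [hX, hY, hZ] at h
  push_cast at h
  zify
  linarith
end

section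
/- Let p be an odd prime and k a positive integer not divisible by p such that x² + ky² = p has an integer solution. If x² + ky² = N has an integer solution for a positive integer N, then it has an integer solution (x₀, y₀) with gcd(x₀, y₀, p) = 1. -/
/-!
If `a² + k b² = p`, composing a representation `X² + k Y² = M` with `(a, b)` by the
Brahmagupta identity gives the two representations `(a X ± k b Y)² + k (a Y ∓ b X)² = p M`.
When `p` does not divide both `X` and `Y`, and `p` is odd, it cannot divide both first
coordinates `a X ± k b Y`, so `p M` again has a representation that is primitive at `p`.
Now descend: if a representation of `N` is divisible by `p` in both coordinates, then
`N = p² M` with `M` represented and smaller, so by induction `M` has a representation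
primitive at `p`, and composing twice with `(a, b)` lifts it back to one of `N`.
-/

section CommRing

variable {R : Type*} [CommRing R] {p k a b : R}

theorem Prime.not_dvd_of_sq_add_mul_sq_eq [IsDomain R] (hp : Prime p) (hpk : ¬ p ∣ k)
    (hab : a ^ 2 + k * b ^ 2 = p) : ¬ p ∣ a := by
  intro ha
  have hkb : p ∣ k * b ^ 2 := by
    rw [show k * b ^ 2 = p - a * a by rw [← hab]; ring]
    exact dvd_sub dvd_rfl (ha.mul_right a)
  have hb : p ∣ b := hp.dvd_of_dvd_pow ((hp.dvd_or_dvd hkb).resolve_left hpk)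
  have hpp : p ^ 2 ∣ a ^ 2 + k * b ^ 2 :=
    dvd_add (pow_dvd_pow_of_dvd ha 2) ((pow_dvd_pow_of_dvd hb 2).mul_left k)
  rw [hab, sq] at hpp
  exact hp.not_dvd_one ((mul_dvd_mul_iff_left hp.ne_zero).1 (by rwa [mul_one]))

theorem Prime.not_dvd_mul_of_sq_add_mul_sq_eq [IsDomain R] (hp : Prime p) (hpk : ¬ p ∣ k)
    (hab : a ^ 2 + k * b ^ 2 = p) : ¬ p ∣ k * b := by
  intro hkb
  refine hp.not_dvd_of_sq_add_mul_sq_eq hpk hab (hp.dvd_of_dvd_pow (n := 2) ?_)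
  rw [show a ^ 2 = p - (k * b) * b by rw [← hab]; ring]
  exact dvd_sub dvd_rfl (hkb.mul_right b)

theorem Prime.exists_sq_add_mul_sq_eq_mul_not_dvd [IsDomain R] (hp : Prime p) (h2 : ¬ p ∣ 2)
    (hpk : ¬ p ∣ k) (hab : a ^ 2 + k * b ^ 2 = p) {X Y M : R} (hXY : X ^ 2 + k * Y ^ 2 = M)
    (hprim : ¬ (p ∣ X ∧ p ∣ Y)) : ∃ u v : R, u ^ 2 + k * v ^ 2 = p * M ∧ ¬ p ∣ u := by
  have cancel : ∀ c d : R, ¬ p ∣ c → p ∣ 2 * (c * d) → p ∣ d := fun c d hc h =>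
    ((hp.dvd_or_dvd ((hp.dvd_or_dvd h).resolve_left h2)).resolve_left hc)
  by_cases hplus : p ∣ a * X + k * b * Y
  · refine ⟨a * X - k * b * Y, a * Y + b * X, by linear_combination (X ^ 2 + k * Y ^ 2) * hab + p * hXY, ?_⟩
    intro hminus
    refine hprim ⟨cancel a X (hp.not_dvd_of_sq_add_mul_sq_eq hpk hab) ?_,
      cancel (k * b) Y (hp.not_dvd_mul_of_sq_add_mul_sq_eq hpk hab) ?_⟩
    · convert dvd_add hplus hminus using 1; ring
    · convert dvd_sub hplus hminus using 1; ring
  · exact ⟨a * X + k * b * Y, a * Y - b * X, by linear_combination (X ^ 2 + k * Y ^ 2) * hab + p * hXY, hplus⟩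

theorem Prime.exists_sq_add_mul_sq_eq_sq_mul_not_dvd [IsDomain R] (hp : Prime p)
    (h2 : ¬ p ∣ 2) (hpk : ¬ p ∣ k) (hab : a ^ 2 + k * b ^ 2 = p) {X Y M : R}
    (hXY : X ^ 2 + k * Y ^ 2 = M) (hprim : ¬ (p ∣ X ∧ p ∣ Y)) :
    ∃ u v : R, u ^ 2 + k * v ^ 2 = p ^ 2 * M ∧ ¬ p ∣ u := by
  obtain ⟨u, v, huv, hu⟩ := hp.exists_sq_add_mul_sq_eq_mul_not_dvd h2 hpk hab hXY hprim
  obtain ⟨u', v', huv', hu'⟩ :=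
    hp.exists_sq_add_mul_sq_eq_mul_not_dvd h2 hpk hab huv (fun h => hu h.1)
  exact ⟨u', v', by rw [huv', ← mul_assoc, sq], hu'⟩

end CommRing

theorem Int.exists_sq_add_mul_sq_eq_not_dvd_and_dvd {p k a b : ℤ} (hp : Prime p)
    (h2 : ¬ p ∣ 2) (hpk : ¬ p ∣ k) (hab : a ^ 2 + k * b ^ 2 = p) {x y N : ℤ} (hN : N ≠ 0)
    (hxy : x ^ 2 + k * y ^ 2 = N) : ∃ u v : ℤ, u ^ 2 + k * v ^ 2 = N ∧ ¬ (p ∣ u ∧ p ∣ v) := by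
  induction hn : N.natAbs using Nat.strong_induction_on generalizing N x y with
  | _ n ih =>
  by_cases hdvd : p ∣ x ∧ p ∣ y
  · obtain ⟨⟨X, rfl⟩, ⟨Y, rfl⟩⟩ := hdvd
    have hNM : N = p ^ 2 * (X ^ 2 + k * Y ^ 2) := by rw [← hxy]; ring
    have hM : X ^ 2 + k * Y ^ 2 ≠ 0 := fun hM => hN (by rw [hNM, hM, mul_zero])
    have hlt : (X ^ 2 + k * Y ^ 2).natAbs < n := by
      have hp2 : 1 < (p ^ 2).natAbs := by
        rw [Int.natAbs_pow]
        exact Nat.one_lt_pow two_ne_zero (Int.prime_iff_natAbs_prime.1 hp).one_lt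
      rw [← hn, hNM, Int.natAbs_mul]
      exact lt_mul_left (Int.natAbs_pos.2 hM) hp2
    obtain ⟨X₀, Y₀, hXY₀, hprim⟩ := ih _ hlt hM rfl rfl
    obtain ⟨u, v, huv, hu⟩ := hp.exists_sq_add_mul_sq_eq_sq_mul_not_dvd h2 hpk hab hXY₀ hprim
    exact ⟨u, v, huv.trans hNM.symm, fun h => hu h.1⟩
  · exact ⟨x, y, hxy, hdvd⟩

theorem Nat.gcd_gcd_eq_one_of_not_dvd_and_dvd {p : ℕ} (hp : p.Prime) {x y : ℤ}
    (h : ¬ ((p : ℤ) ∣ x ∧ (p : ℤ) ∣ y)) : Nat.gcd (Int.gcd x y) p = 1 :=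
  ((hp.coprime_iff_not_dvd).2 fun hd => h
    ⟨(Int.natCast_dvd_natCast.2 hd).trans (Int.gcd_dvd_left x y),
      (Int.natCast_dvd_natCast.2 hd).trans (Int.gcd_dvd_right x y)⟩).symm

theorem stmt_18_general (p : ℕ) (hp : p.Prime) (hodd : p ≠ 2) (k : ℤ)
    (hpk : ¬ (p : ℤ) ∣ k) (hrep : ∃ x y : ℤ, x ^ 2 + k * y ^ 2 = p)
    (N : ℤ) (hN : 0 < N) (hsol : ∃ x y : ℤ, x ^ 2 + k * y ^ 2 = N) :
    ∃ x₀ y₀ : ℤ, x₀ ^ 2 + k * y₀ ^ 2 = N ∧ Nat.gcd (Int.gcd x₀ y₀) p = 1 := by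
  obtain ⟨a, b, hab⟩ := hrep
  obtain ⟨x, y, hxy⟩ := hsol
  have h2 : ¬ (p : ℤ) ∣ 2 := fun h =>
    hodd ((Nat.prime_dvd_prime_iff_eq hp Nat.prime_two).1 (Int.natCast_dvd_natCast.1 h))
  obtain ⟨u, v, huv, hprim⟩ := Int.exists_sq_add_mul_sq_eq_not_dvd_and_dvd
    (Nat.prime_iff_prime_int.1 hp) h2 hpk hab hN.ne' hxy
  exact ⟨u, v, huv, Nat.gcd_gcd_eq_one_of_not_dvd_and_dvd hp hprim⟩

/-- Jones' lemma: if p is an odd prime, p ∤ k > 0, x²+ky² = p is solvable, and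
x²+ky² = N is solvable for N > 0, then it has a solution (x₀,y₀) with
gcd(x₀,y₀,p) = 1. -/
theorem stmt_18 (p : ℕ) (hp : p.Prime) (hodd : p ≠ 2) (k : ℤ) (hk : 0 < k)
    (hpk : ¬ (p : ℤ) ∣ k) (hrep : ∃ x y : ℤ, x ^ 2 + k * y ^ 2 = p)
    (N : ℤ) (hN : 0 < N) (hsol : ∃ x y : ℤ, x ^ 2 + k * y ^ 2 = N) :
    ∃ x₀ y₀ : ℤ, x₀ ^ 2 + k * y₀ ^ 2 = N ∧ Nat.gcd (Int.gcd x₀ y₀) p = 1 :=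
  stmt_18_general p hp hodd k hpk hrep N hN hsol
end

section
/- Every positive integer s with s ≡ 18 (mod 48) that is represented by the quadratic form 2x² + 4y² + 24z² over the integers is also represented by 4x² + 6y² + 8z² with all of x, y, z odd, provided s ≡ 2 (mod 16). -/
/-!
Reducing modulo 16 forces `y` and `z` to be even, so `s = 2x² + 16b² + 96c²`. Since `3 ∣ s`,
`3 ∣ x² - b²`, and after replacing `b` by `-b` if necessary, `x = b + 3t`. Then
`2(b + 3t)² + 16b² + 96c² = 4(t + b + 4c)² + 6(t - b)² + 8(t + b - 2c)²`, and any representation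
of a number `≡ 2 (mod 16)` by `4x² + 6y² + 8z²` has `x`, `y`, `z` odd.
-/

lemma Int.sq_emod_eight_of_odd {x : ℤ} (hx : Odd x) : x ^ 2 % 8 = 1 := by
  obtain ⟨k, rfl⟩ := hx
  obtain ⟨m, hm⟩ := Int.even_mul_succ_self k
  have : (2 * k + 1) ^ 2 = 8 * m + 1 := by linear_combination 4 * hm
  omega

lemma Int.four_dvd_sq_of_even {x : ℤ} (hx : Even x) : 4 ∣ x ^ 2 := by
  simpa using pow_dvd_pow_of_dvd (even_iff_two_dvd.mp hx) 2

lemma Int.four_dvd_sq_and_even_or_sq_emod_eight_and_odd (x : ℤ) :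
    4 ∣ x ^ 2 ∧ Even x ∨ x ^ 2 % 8 = 1 ∧ Odd x := by
  rcases Int.even_or_odd x with hx | hx
  · exact .inl ⟨Int.four_dvd_sq_of_even hx, hx⟩
  · exact .inr ⟨Int.sq_emod_eight_of_odd hx, hx⟩

lemma even_and_even_of_eq_two_sq_add_four_sq_add_twenty_four_sq {s x y z : ℤ}
    (hs : s % 16 = 2) (h : s = 2 * x ^ 2 + 4 * y ^ 2 + 24 * z ^ 2) : Even y ∧ Even z := by
  rcases Int.four_dvd_sq_and_even_or_sq_emod_eight_and_odd x with ⟨hx, -⟩ | ⟨hx, -⟩ <;>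
  rcases Int.four_dvd_sq_and_even_or_sq_emod_eight_and_odd y with ⟨hy, hy'⟩ | ⟨hy, -⟩ <;>
  rcases Int.four_dvd_sq_and_even_or_sq_emod_eight_and_odd z with ⟨hz, hz'⟩ | ⟨hz, -⟩ <;>
  first | exact ⟨hy', hz'⟩ | omega

lemma odd_of_eq_four_sq_add_six_sq_add_eight_sq {s x y z : ℤ} (hs : s % 16 = 2)
    (h : s = 4 * x ^ 2 + 6 * y ^ 2 + 8 * z ^ 2) : Odd x ∧ Odd y ∧ Odd z := by
  rcases Int.four_dvd_sq_and_even_or_sq_emod_eight_and_odd x with ⟨hx, -⟩ | ⟨hx, hx'⟩ <;>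
  rcases Int.four_dvd_sq_and_even_or_sq_emod_eight_and_odd y with ⟨hy, -⟩ | ⟨hy, hy'⟩ <;>
  rcases Int.four_dvd_sq_and_even_or_sq_emod_eight_and_odd z with ⟨hz, -⟩ | ⟨hz, hz'⟩ <;>
  first | exact ⟨hx', hy', hz'⟩ | omega

lemma Prime.exists_sq_eq_sq_and_dvd_sub_of_dvd_sq_sub_sq {p x y : ℤ} (hp : Prime p)
    (h : p ∣ x ^ 2 - y ^ 2) : ∃ y', y' ^ 2 = y ^ 2 ∧ p ∣ x - y' := by
  rw [sq_sub_sq, mul_comm] at h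
  rcases hp.dvd_or_dvd h with h | h
  · exact ⟨y, rfl, h⟩
  · exact ⟨-y, neg_sq y, by rwa [sub_neg_eq_add]⟩

lemma two_sq_add_sixteen_sq_add_ninety_six_sq_eq (t b c : ℤ) :
    2 * (b + 3 * t) ^ 2 + 16 * b ^ 2 + 96 * c ^ 2
      = 4 * (t + b + 4 * c) ^ 2 + 6 * (t - b) ^ 2 + 8 * (t + b - 2 * c) ^ 2 := by
  ring

theorem stmt_19_general (s : ℤ) (h48 : s % 48 = 18)
    (hrep : ∃ x y z : ℤ, s = 2 * x ^ 2 + 4 * y ^ 2 + 24 * z ^ 2) :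
    ∃ x y z : ℤ, Odd x ∧ Odd y ∧ Odd z ∧ s = 4 * x ^ 2 + 6 * y ^ 2 + 8 * z ^ 2 := by
  have h16 : s % 16 = 2 := by omega
  obtain ⟨x, y, z, hxyz⟩ := hrep
  obtain ⟨⟨b, rfl⟩, ⟨c, rfl⟩⟩ := even_and_even_of_eq_two_sq_add_four_sq_add_twenty_four_sq h16 hxyz
  have h3 : (3 : ℤ) ∣ x ^ 2 - b ^ 2 := by
    have : x ^ 2 - b ^ 2 = 3 * (x ^ 2 + 5 * b ^ 2 + 32 * c ^ 2) - s := by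
      linear_combination hxyz
    rw [this]
    exact dvd_sub (dvd_mul_right 3 _) (by omega)
  obtain ⟨b', hb', t, ht⟩ := Int.prime_three.exists_sq_eq_sq_and_dvd_sub_of_dvd_sq_sub_sq h3
  obtain rfl : x = b' + 3 * t := by linarith
  have hs : s = 4 * (t + b' + 4 * c) ^ 2 + 6 * (t - b') ^ 2 + 8 * (t + b' - 2 * c) ^ 2 := by
    rw [← two_sq_add_sixteen_sq_add_ninety_six_sq_eq]
    linear_combination hxyz - 16 * hb'
  obtain ⟨hx, hy, hz⟩ := odd_of_eq_four_sq_add_six_sq_add_eight_sq h16 hs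
  exact ⟨_, _, _, hx, hy, hz, hs⟩

/-- If s > 0, s ≡ 18 (mod 48), s ≡ 2 (mod 16), and s = 2x²+4y²+24z² is solvable,
then s = 4x²+6y²+8z² with x, y, z all odd. -/
theorem stmt_19 (s : ℤ) (hs : 0 < s) (h48 : s % 48 = 18) (h16 : s % 16 = 2)
    (hrep : ∃ x y z : ℤ, s = 2 * x ^ 2 + 4 * y ^ 2 + 24 * z ^ 2) :
    ∃ x y z : ℤ, Odd x ∧ Odd y ∧ Odd z ∧ s = 4 * x ^ 2 + 6 * y ^ 2 + 8 * z ^ 2 :=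
  stmt_19_general s h48 hrep
end
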